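/- Let q be a real number with q > 1. For a natural number a write (1/q)_a = ∏_{j=1}^{a} (1 - q^{-j}) (with (1/q)_0 = 1). Then for every natural number n, ∑_{r=0}^{n} (-1)^{r} (1/q)_n / (q^r (1/q)_r (1/q)_{n-r}) = ∏_{j=1}^{⌈n/2⌉} (1 - q^{1-2j}). (Equivalently, the right side is (1-1/q)(1-1/q^3)⋯(1-1/q^{n-1}) if n is even and (1-1/q)(1-1/q^3)⋯(1-1/q^n) if n is odd.) -/

import Mathlib

/-- The finite q-Pochhammer product `(1/q)_a = ∏_{j=1}^{a} (1 - q^{-j})`. -/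
noncomputable def qPoch (q : ℝ) (a : ℕ) : ℝ := ∏ j ∈ Finset.Icc 1 a, (1 - q⁻¹ ^ j)

/-!
Write `t = 1/q` and `[n, r]` for the Gaussian binomial coefficient in `t`, so that the sum is
`F_n(t)` where `F_n(x) = ∑_r (-x)^r [n, r]`. The two Pascal rules for `[n, r]` give
`F_{n+1}(x) = F_n(t x) - x F_n(x)` and `F_{n+1}(t x) = F_n(t x) - t^{n+1} x F_n(x)`,
so the pair `(F_n(t), F_n(1))` evolves by
`(a, b) ↦ (a - t^{n+1} b, a - b)`. Starting from `(1, 1)` it alternates between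
`(G_m, G_m)` at `n = 2m` and `(G_{m+1}, 0)` at `n = 2m + 1`, where `G_m = ∏_{j ≤ m} (1 - t^{2j-1})`.
-/

open Finset

namespace GaussianBinomial

variable {K : Type*} [Field K]

def poch (t : K) (a : ℕ) : K := ∏ j ∈ Icc 1 a, (1 - t ^ j)

@[simp]
lemma poch_zero (t : K) : poch t 0 = 1 := by simp [poch]

lemma poch_succ (t : K) (a : ℕ) : poch t (a + 1) = poch t a * (1 - t ^ (a + 1)) := by
  rw [poch, poch, prod_Icc_succ_top (by omega)]

lemma one_sub_pow_ne_zero {t : K} (ht : ¬IsOfFinOrder t) {j : ℕ} (hj : j ≠ 0) :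
    1 - t ^ j ≠ 0 := fun h ↦
  ht (isOfFinOrder_iff_pow_eq_one.mpr ⟨j, Nat.pos_of_ne_zero hj, (sub_eq_zero.mp h).symm⟩)

lemma poch_ne_zero {t : K} (ht : ¬IsOfFinOrder t) (a : ℕ) : poch t a ≠ 0 :=
  prod_ne_zero_iff.mpr fun j hj ↦ one_sub_pow_ne_zero ht (by rw [mem_Icc] at hj; omega)

/-- The `if` avoids the truncated subtraction `n - r` giving a nonzero value for `r > n`. -/
def gaussBinom (t : K) (n r : ℕ) : K :=
  if r ≤ n then poch t n / (poch t r * poch t (n - r)) else 0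

lemma gaussBinom_of_lt (t : K) {n r : ℕ} (h : n < r) : gaussBinom t n r = 0 := by
  simp [gaussBinom, Nat.not_le.mpr h]

lemma gaussBinom_zero_right {t : K} (ht : ¬IsOfFinOrder t) (n : ℕ) : gaussBinom t n 0 = 1 := by
  simp [gaussBinom, poch_ne_zero ht]

lemma gaussBinom_self {t : K} (ht : ¬IsOfFinOrder t) (n : ℕ) : gaussBinom t n n = 1 := by
  simp [gaussBinom, poch_ne_zero ht]

lemma gaussBinom_succ_right_mul {t : K} (ht : ¬IsOfFinOrder t) (n r : ℕ) :
    gaussBinom t n (r + 1) * (1 - t ^ (r + 1)) = gaussBinom t n r * (1 - t ^ (n - r)) := by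
  rcases lt_or_ge r n with h | h
  · obtain ⟨k, rfl⟩ : ∃ k, n = r + 1 + k := ⟨n - r - 1, by omega⟩
    have hr : r + 1 + k - r = k + 1 := by omega
    simp only [gaussBinom, if_pos h.le, if_pos (by omega : r + 1 ≤ r + 1 + k), hr,
      Nat.add_sub_cancel_left, poch_succ]
    have := poch_ne_zero ht r
    have := poch_ne_zero ht k
    have := one_sub_pow_ne_zero ht (Nat.succ_ne_zero r)
    have := one_sub_pow_ne_zero ht (Nat.succ_ne_zero k)
    field_simp
  · rw [gaussBinom_of_lt t (by omega), Nat.sub_eq_zero_of_le h]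
    ring

lemma gaussBinom_succ_succ {t : K} (ht : ¬IsOfFinOrder t) (n r : ℕ) :
    gaussBinom t (n + 1) (r + 1) = gaussBinom t n r + t ^ (r + 1) * gaussBinom t n (r + 1) := by
  rcases lt_trichotomy r n with h | rfl | h
  · obtain ⟨k, rfl⟩ : ∃ k, n = r + 1 + k := ⟨n - r - 1, by omega⟩
    have hr : r + 1 + k - r = k + 1 := by omega
    simp only [gaussBinom, if_pos (by omega : r + 1 ≤ r + 1 + k + 1), if_pos h.le,
      if_pos (by omega : r + 1 ≤ r + 1 + k), hr, Nat.add_sub_cancel_left,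
      Nat.add_sub_add_right, poch_succ]
    have := poch_ne_zero ht r
    have := poch_ne_zero ht k
    have := one_sub_pow_ne_zero ht (Nat.succ_ne_zero r)
    have := one_sub_pow_ne_zero ht (Nat.succ_ne_zero k)
    field_simp
    ring
  · rw [gaussBinom_self ht, gaussBinom_self ht, gaussBinom_of_lt t (by omega)]
    ring
  · rw [gaussBinom_of_lt t (by omega), gaussBinom_of_lt t h, gaussBinom_of_lt t (by omega)]
    ring

lemma gaussBinom_succ_succ' {t : K} (ht : ¬IsOfFinOrder t) (n r : ℕ) :
    gaussBinom t (n + 1) (r + 1) = t ^ (n - r) * gaussBinom t n r + gaussBinom t n (r + 1) := by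
  linear_combination gaussBinom_succ_succ ht n r - gaussBinom_succ_right_mul ht n r

def altSum (t : K) (n : ℕ) (x : K) : K := ∑ r ∈ range (n + 1), (-x) ^ r * gaussBinom t n r

lemma altSum_eq_one_add {t : K} (ht : ¬IsOfFinOrder t) (n : ℕ) (x : K) :
    altSum t n x = 1 + ∑ r ∈ range n, (-x) ^ (r + 1) * gaussBinom t n (r + 1) := by
  rw [altSum, sum_range_succ', gaussBinom_zero_right ht, add_comm]
  ring

/-- The vanishing `r = n + 1` term is added to bring the sum to the length of `altSum t (n + 1)`. -/
lemma altSum_eq_one_add' {t : K} (ht : ¬IsOfFinOrder t) (n : ℕ) (x : K) :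
    altSum t n x = 1 + ∑ r ∈ range (n + 1), (-x) ^ (r + 1) * gaussBinom t n (r + 1) := by
  rw [altSum_eq_one_add ht, sum_range_succ, gaussBinom_of_lt t (Nat.lt_succ_self n)]
  ring

lemma altSum_succ {t : K} (ht : ¬IsOfFinOrder t) (n : ℕ) (x : K) :
    altSum t (n + 1) x = altSum t n (t * x) - x * altSum t n x := by
  rw [altSum_eq_one_add ht, altSum_eq_one_add' ht, altSum, mul_sum, add_sub_assoc,
    ← sum_sub_distrib]
  congr 1
  refine sum_congr rfl fun r _ ↦ ?_
  rw [gaussBinom_succ_succ ht]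
  ring

lemma altSum_succ_mul {t : K} (ht : ¬IsOfFinOrder t) (n : ℕ) (x : K) :
    altSum t (n + 1) (t * x) = altSum t n (t * x) - t ^ (n + 1) * x * altSum t n x := by
  rw [altSum_eq_one_add ht, altSum_eq_one_add' ht, altSum, mul_sum, add_sub_assoc,
    ← sum_sub_distrib]
  congr 1
  refine sum_congr rfl fun r hr ↦ ?_
  have hpow : t ^ (n + 1) = t ^ (r + 1) * t ^ (n - r) := by
    rw [← pow_add]; congr 1; rw [mem_range] at hr; omega
  rw [gaussBinom_succ_succ' ht, hpow]
  ring

lemma altSum_succ_one {t : K} (ht : ¬IsOfFinOrder t) (n : ℕ) :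
    altSum t (n + 1) 1 = altSum t n t - altSum t n 1 := by
  simpa using altSum_succ ht n 1

lemma altSum_succ_self {t : K} (ht : ¬IsOfFinOrder t) (n : ℕ) :
    altSum t (n + 1) t = altSum t n t - t ^ (n + 1) * altSum t n 1 := by
  simpa using altSum_succ_mul ht n 1

def oddPoch (t : K) (m : ℕ) : K := ∏ j ∈ Icc 1 m, (1 - t ^ (2 * j - 1))

lemma oddPoch_succ (t : K) (m : ℕ) : oddPoch t (m + 1) = oddPoch t m * (1 - t ^ (2 * m + 1)) := by
  rw [oddPoch, oddPoch, prod_Icc_succ_top (by omega)]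
  rfl

lemma altSum_two_mul {t : K} (ht : ¬IsOfFinOrder t) (m : ℕ) :
    altSum t (2 * m) t = oddPoch t m ∧ altSum t (2 * m) 1 = oddPoch t m := by
  induction m with
  | zero => simp [altSum, gaussBinom_zero_right ht, oddPoch]
  | succ m ih =>
    obtain ⟨hS, hT⟩ := ih
    have hS₁ : altSum t (2 * m + 1) t = oddPoch t (m + 1) := by
      rw [altSum_succ_self ht, hS, hT, oddPoch_succ]
      ring
    have hT₁ : altSum t (2 * m + 1) 1 = 0 := by
      rw [altSum_succ_one ht, hS, hT, sub_self]
    rw [show 2 * (m + 1) = 2 * m + 1 + 1 by ring, altSum_succ_self ht (2 * m + 1),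
      altSum_succ_one ht (2 * m + 1), hS₁, hT₁]
    constructor <;> ring

lemma altSum_self {t : K} (ht : ¬IsOfFinOrder t) (n : ℕ) :
    altSum t n t = oddPoch t ((n + 1) / 2) := by
  obtain ⟨m, rfl | rfl⟩ := Nat.even_or_odd' n
  · rw [(altSum_two_mul ht m).1]
    congr 1
    omega
  · rw [altSum_succ_self ht, (altSum_two_mul ht m).1, (altSum_two_mul ht m).2,
      show (2 * m + 1 + 1) / 2 = m + 1 by omega, oddPoch_succ]
    ring

end GaussianBinomial

open GaussianBinomial

theorem stmt1 (q : ℝ) (hq : 1 < q) (n : ℕ) :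
    ∑ r ∈ Finset.range (n + 1),
      (-1 : ℝ) ^ r * qPoch q n / (q ^ r * qPoch q r * qPoch q (n - r)) =
    ∏ j ∈ Finset.Icc 1 ((n + 1) / 2), (1 - q ^ (1 - 2 * (j : ℤ))) := by
  have hq₀ : 0 < q := by linarith
  have ht : ¬IsOfFinOrder q⁻¹ := by
    refine orderOf_eq_zero_iff.mp (orderOf_abs_ne_one ?_)
    rw [abs_of_pos (inv_pos.mpr hq₀)]
    exact (inv_lt_one_of_one_lt₀ hq).ne
  have hpoch (a : ℕ) : qPoch q a = poch q⁻¹ a := rfl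
  have hsum : ∑ r ∈ range (n + 1),
      (-1 : ℝ) ^ r * qPoch q n / (q ^ r * qPoch q r * qPoch q (n - r)) = altSum q⁻¹ n q⁻¹ := by
    refine sum_congr rfl fun r hr ↦ ?_
    rw [gaussBinom, if_pos (Nat.lt_succ_iff.mp (mem_range.mp hr)), hpoch, hpoch, hpoch,
      neg_pow q⁻¹, inv_pow]
    have := poch_ne_zero ht r
    have := poch_ne_zero ht (n - r)
    field_simp
  rw [hsum, altSum_self ht, oddPoch]
  refine prod_congr rfl fun j hj ↦ ?_
  have hexp : (1 : ℤ) - 2 * j = -((2 * j - 1 : ℕ) : ℤ) := by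
    rw [mem_Icc] at hj
    omega
  rw [hexp, zpow_neg, zpow_natCast, inv_pow]
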